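/- arXiv:2211.12348 — 2 statements merged into one kernel-verified Lean document; each statement's English description precedes it below -/
import Mathlib

section
/- With i.i.d. good edge-weights on K_{n,n} and W_n the maximum weight of a perfect matching, we have W_n = (1 + o(1)) n Λ*⁻¹(log n) with high probability, i.e. for every ε > 0, P(|W_n − n Λ*⁻¹(log n)| > ε n Λ*⁻¹(log n)) → 0 as n → ∞. -/
open MeasureTheory ProbabilityTheory Real Filter

noncomputable section

-- Log-moment generating function `Λ`, valued in `EReal` (`⊤` when the exponential
-- moment is infinite).
open Classical in
def lmgf {Ω : Type*} [MeasurableSpace Ω] (μ : Measure Ω) (X : Ω → ℝ) (s : ℝ) : EReal :=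
  if Integrable (fun ω => Real.exp (s * X ω)) μ
  then ((Real.log (∫ ω, Real.exp (s * X ω) ∂μ) : ℝ) : EReal)
  else ⊤

/-- The Legendre transform `Λ*` of the log-moment generating function (rate function). -/
def rateFn {Ω : Type*} [MeasurableSpace Ω] (μ : Measure Ω) (X : Ω → ℝ) (t : ℝ) : EReal :=
  ⨆ s : ℝ, ((s * t : ℝ) : EReal) - lmgf μ X s

/-- The generalised inverse `Λ*⁻¹(t) = inf {s ≥ 0 : Λ*(s) ≥ t}`. -/
def rateFnInv {Ω : Type*} [MeasurableSpace Ω] (μ : Measure Ω) (X : Ω → ℝ) (t : ℝ) : ℝ :=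
  sInf {s : ℝ | 0 ≤ s ∧ (t : EReal) ≤ rateFn μ X s}

/-- `X` is symmetric: `-X` has the same distribution as `X`. -/
def SymmetricRV {Ω : Type*} [MeasurableSpace Ω] (μ : Measure Ω) (X : Ω → ℝ) : Prop :=
  Measure.map X μ = Measure.map (fun ω => -X ω) μ

/-- `Λ` is finite in a neighbourhood of `0`. -/
def FiniteLmgfNearZero {Ω : Type*} [MeasurableSpace Ω] (μ : Measure Ω) (X : Ω → ℝ) : Prop :=
  ∃ δ > (0:ℝ), ∀ s : ℝ, |s| < δ → lmgf μ X s ≠ ⊤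

/-- `X` has regular upper tails: `P(X > t) = exp(-(1+o(1)) Λ*(t))` as `t → ∞`
(vacuous at points where `Λ*(t) = ∞`). -/
def RegularUpperTails {Ω : Type*} [MeasurableSpace Ω] (μ : Measure Ω) (X : Ω → ℝ) : Prop :=
  ∀ ε > (0:ℝ), ∀ᶠ t in atTop, ∀ r : ℝ, rateFn μ X t = (r : EReal) →
    Real.exp (-(1+ε)*r) ≤ (μ {ω | t < X ω}).toReal ∧
    (μ {ω | t < X ω}).toReal ≤ Real.exp (-(1-ε)*r)

/-- A good random variable: symmetric, `Λ` finite near `0`, regular upper tails. -/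
def Good {Ω : Type*} [MeasurableSpace Ω] (μ : Measure Ω) (X : Ω → ℝ) : Prop :=
  SymmetricRV μ X ∧ FiniteLmgfNearZero μ X ∧ RegularUpperTails μ X

/-- The non-diagonal elements of `Sym2 (Fin n)`: the edges of the complete graph `K_n`. -/
abbrev EdgeT (n : ℕ) := {e : Sym2 (Fin n) // ¬ e.IsDiag}


/-- Total weight of a subgraph `G'` of `K_n` with edge weights `x`. -/
def graphWeight {n : ℕ} (x : EdgeT n → ℝ) (G' : SimpleGraph (Fin n)) : ℝ :=
  ∑ e : EdgeT n, Set.indicator {e' : EdgeT n | (e' : Sym2 (Fin n)) ∈ G'.edgeSet} x e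

/-- Total weight of the edges of a walk `p` with edge weights `x`. -/
def walkWeight {n : ℕ} (x : EdgeT n → ℝ) {u v : Fin n}
    (p : (⊤ : SimpleGraph (Fin n)).Walk u v) : ℝ :=
  ∑ e : EdgeT n, Set.indicator {e' : EdgeT n | (e' : Sym2 (Fin n)) ∈ p.edges} x e

end

/-!
Write `J = Λ*⁻¹(log n)`. Symmetry gives `Λ ≥ 0`, hence the scaling `Λ*(c t) ≤ c Λ*(t)` for
`0 ≤ c ≤ 1`.

Upper deviation: by the Chernoff bound each of the `n! ≤ exp (n log n)` permutation sums exceeds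
`n (1 + ε) J` with probability at most `exp (-n Λ*((1 + ε) J))`, and scaling gives
`Λ*((1 + ε) J) ≥ (1 + ε/4) log n`.

Lower deviation: if no permutation uses only edges heavier than `(1 - ε) J`, Hall's theorem yields
`A`, `B` with `|B| = |A| - 1` and no heavy edge from `A` to the complement of `B`; a union bound
over such pairs is at most `1/n` once each edge is heavy with probability `p ≥ 8 log n / n`.
If `J` stays bounded, `p` is bounded below; otherwise scaling gives `Λ*((1 - ε) J) ≤ c log n`
for some `c < 1`, and the regular upper tails give `p ≥ n^(-(1 - δ))`.
-/

open scoped Topology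

section RateFunction

variable {Ω₀ : Type*} [MeasurableSpace Ω₀] {μ₀ : Measure Ω₀} {ξ : Ω₀ → ℝ}

lemma lmgf_of_integrable {s : ℝ} (h : Integrable (fun ω => exp (s * ξ ω)) μ₀) :
    lmgf μ₀ ξ s = (cgf ξ μ₀ s : EReal) :=
  if_pos h

lemma lmgf_ne_top_iff {s : ℝ} :
    lmgf μ₀ ξ s ≠ ⊤ ↔ Integrable (fun ω => exp (s * ξ ω)) μ₀ := by
  by_cases h : Integrable (fun ω => exp (s * ξ ω)) μ₀ <;> simp [lmgf, h]

lemma le_rateFn (s t : ℝ) : ((s * t : ℝ) : EReal) - lmgf μ₀ ξ s ≤ rateFn μ₀ ξ t :=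
  le_iSup (fun s => ((s * t : ℝ) : EReal) - lmgf μ₀ ξ s) s

lemma SymmetricRV.identDistrib_neg (hsym : SymmetricRV μ₀ ξ) (hξ : Measurable ξ) :
    IdentDistrib ξ (-ξ) μ₀ μ₀ :=
  ⟨hξ.aemeasurable, hξ.neg.aemeasurable, hsym⟩

lemma SymmetricRV.integrable_exp_neg_mul (hsym : SymmetricRV μ₀ ξ) (hξ : Measurable ξ) {s : ℝ}
    (h : Integrable (fun ω => exp (s * ξ ω)) μ₀) :
    Integrable (fun ω => exp (-s * ξ ω)) μ₀ := by
  have := ((hsym.identDistrib_neg hξ).comp (measurable_exp.comp (measurable_const_mul s))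
    ).integrable_iff.mp h
  simpa [Function.comp_def] using this

lemma SymmetricRV.mgf_neg (hsym : SymmetricRV μ₀ ξ) (hξ : Measurable ξ) (s : ℝ) :
    mgf ξ μ₀ (-s) = mgf ξ μ₀ s := by
  rw [← ProbabilityTheory.mgf_neg]
  exact ((hsym.identDistrib_neg hξ).comp (measurable_exp.comp (measurable_const_mul s))
    ).integral_eq.symm

lemma FiniteLmgfNearZero.exists_le_rateFn (hfin : FiniteLmgfNearZero μ₀ ξ) (c : ℝ) :
    ∃ v, 0 ≤ v ∧ (c : EReal) ≤ rateFn μ₀ ξ v := by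
  obtain ⟨δ, hδ, hδfin⟩ := hfin
  have hint := lmgf_ne_top_iff.mp (hδfin (δ / 2) (by rw [abs_of_pos (by linarith)]; linarith))
  set r := cgf ξ μ₀ (δ / 2)
  refine ⟨max 0 ((c + r) / (δ / 2)), le_max_left _ _, le_trans ?_ (le_rateFn (δ / 2) _)⟩
  rw [lmgf_of_integrable hint, ← EReal.coe_sub, EReal.coe_le_coe_iff]
  have := (div_le_iff₀' (by linarith : (0 : ℝ) < δ / 2)).mp
    (le_max_right 0 ((c + r) / (δ / 2)))
  linarith

lemma rateFnInv_nonneg (c : ℝ) : 0 ≤ rateFnInv μ₀ ξ c :=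
  Real.sInf_nonneg fun _ hx => hx.1

lemma rateFnInv_le {c v : ℝ} (hv : 0 ≤ v) (h : (c : EReal) ≤ rateFn μ₀ ξ v) :
    rateFnInv μ₀ ξ c ≤ v :=
  csInf_le ⟨0, fun _ hx => hx.1⟩ ⟨hv, h⟩

lemma rateFn_lt_of_lt_rateFnInv {c v : ℝ} (hv : 0 ≤ v) (h : v < rateFnInv μ₀ ξ c) :
    rateFn μ₀ ξ v < c :=
  lt_of_not_ge fun h' => (rateFnInv_le hv h').not_gt h

lemma rateFnInv_mono (hfin : FiniteLmgfNearZero μ₀ ξ) : Monotone (rateFnInv μ₀ ξ) :=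
  fun _ c' hcc' => csInf_le_csInf ⟨0, fun _ hx => hx.1⟩ (hfin.exists_le_rateFn c')
    fun _ hs => ⟨hs.1, le_trans (EReal.coe_le_coe_iff.mpr hcc') hs.2⟩

lemma SymmetricRV.exists_pos_measure_gt (hsym : SymmetricRV μ₀ ξ) (hξ : Measurable ξ)
    (hξ0 : ¬∀ᵐ ω ∂μ₀, ξ ω = 0) : ∃ w > 0, 0 < μ₀ {ω | w < ξ ω} := by
  by_contra! h
  have hpos : μ₀ {ω | 0 < ξ ω} = 0 := by
    have : {ω | 0 < ξ ω} = ⋃ k : ℕ, {ω | 1 / ((k : ℝ) + 1) < ξ ω} := by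
      ext ω
      simp only [Set.mem_iUnion, Set.mem_ofPred_eq]
      exact ⟨fun h => exists_nat_one_div_lt h, fun ⟨k, hk⟩ => Nat.one_div_pos_of_nat.trans hk⟩
    rw [this]
    exact measure_iUnion_null fun k => nonpos_iff_eq_zero.mp (h _ (by positivity))
  have hneg : μ₀ {ω | ξ ω < 0} = 0 := by
    rw [← hpos]
    convert (hsym.identDistrib_neg hξ).measure_mem_eq (measurableSet_Iio (a := (0 : ℝ))) using 2 <;>
    · ext ω
      simp
  refine hξ0 ?_
  filter_upwards [measure_eq_zero_iff_ae_notMem.mp hpos,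
    measure_eq_zero_iff_ae_notMem.mp hneg] with ω h₁ h₂
  simp only [not_lt] at h₁ h₂
  exact le_antisymm h₁ h₂

variable [IsProbabilityMeasure μ₀]

lemma lmgf_zero : lmgf μ₀ ξ 0 = 0 := by
  rw [lmgf_of_integrable (by simp), cgf_zero, EReal.coe_zero]

lemma SymmetricRV.one_le_mgf (hsym : SymmetricRV μ₀ ξ)
    (hξ : Measurable ξ) {s : ℝ} (h : Integrable (fun ω => exp (s * ξ ω)) μ₀) :
    1 ≤ mgf ξ μ₀ s := by
  have h' := hsym.integrable_exp_neg_mul hξ h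
  -- `exp x + exp (-x) ≥ 2`
  have two_le : 2 ≤ mgf ξ μ₀ s + mgf ξ μ₀ (-s) := by
    rw [mgf, mgf, ← integral_add h h']
    calc (2 : ℝ) = ∫ _, (2 : ℝ) ∂μ₀ := by simp
      _ ≤ _ := integral_mono (integrable_const 2) (h.add h') fun ω => by
        have := add_one_le_exp (s * ξ ω)
        have := add_one_le_exp (-s * ξ ω)
        simp only [neg_mul, Pi.add_apply] at *
        linarith
  linarith [hsym.mgf_neg hξ s]

lemma SymmetricRV.lmgf_nonneg (hsym : SymmetricRV μ₀ ξ)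
    (hξ : Measurable ξ) (s : ℝ) : 0 ≤ lmgf μ₀ ξ s := by
  by_cases h : Integrable (fun ω => exp (s * ξ ω)) μ₀
  · rw [lmgf_of_integrable h]
    exact_mod_cast log_nonneg (hsym.one_le_mgf hξ h)
  · simp [lmgf, h]

lemma rateFn_nonneg (t : ℝ) : 0 ≤ rateFn μ₀ ξ t := by
  simpa [lmgf_zero] using le_rateFn (μ₀ := μ₀) (ξ := ξ) 0 t

lemma exists_rateFn_eq_coe {t R : ℝ} (h : rateFn μ₀ ξ t ≤ R) :
    ∃ r : ℝ, rateFn μ₀ ξ t = r ∧ r ≤ R := by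
  induction hr : rateFn μ₀ ξ t using EReal.rec with
  | bot => exact absurd (hr ▸ rateFn_nonneg t) (by simp)
  | coe r => exact ⟨r, rfl, by rw [hr] at h; exact_mod_cast h⟩
  | top => simp [hr] at h

lemma SymmetricRV.rateFn_mul_le (hsym : SymmetricRV μ₀ ξ) (hξ : Measurable ξ) {c R t : ℝ}
    (hc0 : 0 ≤ c) (hc1 : c ≤ 1) (h : rateFn μ₀ ξ t ≤ R) :
    rateFn μ₀ ξ (c * t) ≤ ((c * R : ℝ) : EReal) := by
  refine iSup_le fun s => ?_
  by_cases hs : Integrable (fun ω => exp (s * ξ ω)) μ₀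
  · have hterm := (le_rateFn s t).trans h
    have hr : 0 ≤ cgf ξ μ₀ s := log_nonneg (hsym.one_le_mgf hξ hs)
    rw [lmgf_of_integrable hs, ← EReal.coe_sub, EReal.coe_le_coe_iff] at hterm ⊢
    -- `c (s t - Λ s) ≥ s (c t) - Λ s` because `Λ s ≥ 0` and `c ≤ 1`
    nlinarith [mul_le_mul_of_nonneg_left hterm hc0, mul_nonneg (sub_nonneg.mpr hc1) hr]
  · simp [lmgf, hs]

lemma SymmetricRV.rateFn_monotoneOn (hsym : SymmetricRV μ₀ ξ) (hξ : Measurable ξ) :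
    MonotoneOn (rateFn μ₀ ξ) (Set.Ici 0) := by
  intro t ht t' _ htt'
  refine iSup_le fun s => ?_
  rcases le_or_gt 0 s with hs | hs
  · refine le_trans (EReal.sub_le_sub ?_ le_rfl) (le_rateFn s t')
    exact_mod_cast mul_le_mul_of_nonneg_left htt' hs
  · calc ((s * t : ℝ) : EReal) - lmgf μ₀ ξ s ≤ ((s * t : ℝ) : EReal) - 0 :=
          EReal.sub_le_sub le_rfl (hsym.lmgf_nonneg hξ s)
      _ ≤ rateFn μ₀ ξ t' := by
          rw [sub_zero]
          exact le_trans (by exact_mod_cast mul_nonpos_of_nonpos_of_nonneg hs.le ht)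
            (rateFn_nonneg t')

lemma le_rateFn_of_rateFnInv_lt (hsym : SymmetricRV μ₀ ξ) (hξ : Measurable ξ)
    (hfin : FiniteLmgfNearZero μ₀ ξ) {c v : ℝ} (h : rateFnInv μ₀ ξ c < v) :
    (c : EReal) ≤ rateFn μ₀ ξ v := by
  obtain ⟨w, ⟨hw0, hw⟩, hwv⟩ := exists_lt_of_csInf_lt (hfin.exists_le_rateFn c) h
  exact hw.trans (hsym.rateFn_monotoneOn hξ hw0 (Set.mem_Ici.mpr (hw0.trans hwv.le)) hwv.le)

lemma lmgf_le_of_ae_le {u s : ℝ} (hu : ∀ᵐ ω ∂μ₀, ξ ω ≤ u) (hξ : Measurable ξ) (hs : 0 ≤ s) :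
    lmgf μ₀ ξ s ≤ ((s * u : ℝ) : EReal) := by
  have hexp : ∀ᵐ ω ∂μ₀, exp (s * ξ ω) ≤ exp (s * u) := by
    filter_upwards [hu] with ω hω
    exact exp_le_exp.mpr (mul_le_mul_of_nonneg_left hω hs)
  have hint : Integrable (fun ω => exp (s * ξ ω)) μ₀ :=
    (integrable_const _).mono' (hξ.const_mul s).exp.aestronglyMeasurable
      (by filter_upwards [hexp] with ω hω; rwa [norm_of_nonneg (exp_pos _).le])
  have hmgf : mgf ξ μ₀ s ≤ exp (s * u) :=
    (integral_mono_ae hint (integrable_const _) hexp).trans_eq (by simp)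
  rw [lmgf_of_integrable hint]
  exact_mod_cast (log_le_iff_le_exp (mgf_pos hint)).mpr hmgf

lemma rateFn_eq_top_of_ae_le {u v : ℝ} (hu : ∀ᵐ ω ∂μ₀, ξ ω ≤ u) (hξ : Measurable ξ)
    (huv : u < v) : rateFn μ₀ ξ v = ⊤ := by
  refine EReal.eq_top_iff_forall_lt _ |>.mpr fun y => ?_
  set s := max 0 ((y + 1) / (v - u))
  have hs : y + 1 ≤ s * (v - u) :=
    (div_le_iff₀ (by linarith)).mp (le_max_right 0 ((y + 1) / (v - u)))
  refine lt_of_lt_of_le ?_ ((EReal.sub_le_sub le_rfl (lmgf_le_of_ae_le hu hξ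
    (le_max_left _ _))).trans (le_rateFn s v))
  rw [← EReal.coe_sub, EReal.coe_lt_coe_iff]
  linarith

lemma measure_gt_pos_of_rateFn_ne_top (hξ : Measurable ξ) {u v : ℝ} (huv : u < v)
    (hv : rateFn μ₀ ξ v ≠ ⊤) : 0 < μ₀ {ω | u < ξ ω} := by
  refine pos_iff_ne_zero.mpr fun h0 => hv (rateFn_eq_top_of_ae_le ?_ hξ huv)
  simpa [ae_iff] using h0

lemma measure_gt_pos_of_lt_rateFnInv (hξ : Measurable ξ) {u c : ℝ} (hu : 0 ≤ u)
    (h : u < rateFnInv μ₀ ξ c) : 0 < μ₀ {ω | u < ξ ω} :=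
  measure_gt_pos_of_rateFn_ne_top hξ (lt_add_of_pos_right u (half_pos (sub_pos.mpr h)))
    (rateFn_lt_of_lt_rateFnInv (c := c) (by linarith) (by linarith)).ne_top

lemma rateFnInv_eq_zero_of_ae_eq_zero (hξ : Measurable ξ) (h0 : ∀ᵐ ω ∂μ₀, ξ ω = 0)
    (c : ℝ) : rateFnInv μ₀ ξ c = 0 := by
  refine le_antisymm (le_of_forall_gt_imp_ge_of_dense fun v hv => rateFnInv_le hv.le ?_)
    (rateFnInv_nonneg c)
  rw [rateFn_eq_top_of_ae_le (h0.mono fun _ h => h.le) hξ hv]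
  exact le_top

lemma SymmetricRV.rateFn_le_neg_log_measure_gt (hsym : SymmetricRV μ₀ ξ) (hξ : Measurable ξ)
    {v w : ℝ} (hv : 0 ≤ v) (hvw : v ≤ w) (hw : 0 < μ₀ {ω | w < ξ ω}) :
    rateFn μ₀ ξ v ≤ ((-log (μ₀.real {ω | w < ξ ω}) : ℝ) : EReal) := by
  set P := μ₀.real {ω | w < ξ ω}
  have hP : 0 < P := ENNReal.toReal_pos hw.ne' (measure_ne_top _ _)
  have hlogP : log P ≤ 0 := log_nonpos hP.le measureReal_le_one
  refine iSup_le fun s => ?_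
  by_cases hs : Integrable (fun ω => exp (s * ξ ω)) μ₀
  · rw [lmgf_of_integrable hs, ← EReal.coe_sub, EReal.coe_le_coe_iff]
    rcases le_or_gt 0 s with hs0 | hs0
    · have hmarkov : exp (s * w) * P ≤ mgf ξ μ₀ s := by
        refine le_trans (mul_le_mul_of_nonneg_left (measureReal_mono fun ω hω => ?_)
          (exp_pos _).le) (mul_meas_ge_le_integral_of_nonneg
            (.of_forall fun _ => (exp_pos _).le) hs _)
        exact exp_le_exp.mpr (mul_le_mul_of_nonneg_left (le_of_lt hω) hs0)
      have := log_le_log (by positivity) hmarkov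
      rw [log_mul (exp_pos _).ne' hP.ne', log_exp] at this
      have : s * v ≤ s * w := mul_le_mul_of_nonneg_left hvw hs0
      unfold cgf
      linarith
    · have : 0 ≤ cgf ξ μ₀ s := log_nonneg (hsym.one_le_mgf hξ hs)
      nlinarith
  · simp [lmgf, hs]

lemma SymmetricRV.eventually_le_rateFnInv_log (hsym : SymmetricRV μ₀ ξ) (hξ : Measurable ξ)
    (hfin : FiniteLmgfNearZero μ₀ ξ) {w : ℝ} (hw : 0 < μ₀ {ω | w < ξ ω}) :
    ∀ᶠ n : ℕ in atTop, w ≤ rateFnInv μ₀ ξ (log n) := by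
  filter_upwards [(tendsto_log_atTop.comp tendsto_natCast_atTop_atTop).eventually_gt_atTop
    (-log (μ₀.real {ω | w < ξ ω}))] with n hn
  obtain ⟨v₀, hv₀⟩ := hfin.exists_le_rateFn (log n)
  refine le_csInf ⟨v₀, hv₀⟩ fun v ⟨hv0, hv⟩ => le_of_not_gt fun hvw => ?_
  have := hv.trans (hsym.rateFn_le_neg_log_measure_gt hξ hv0 hvw.le hw)
  exact (EReal.coe_le_coe_iff.mp this).not_gt hn

lemma mul_lt_rateFn_mul_rateFnInv (hsym : SymmetricRV μ₀ ξ) (hξ : Measurable ξ)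
    (hfin : FiniteLmgfNearZero μ₀ ξ) {ε L : ℝ} (hε0 : 0 < ε) (hε1 : ε < 1) (hL : 0 < L)
    (hJ : 0 < rateFnInv μ₀ ξ L) :
    (((1 + ε / 4) * L : ℝ) : EReal) < rateFn μ₀ ξ ((1 + ε) * rateFnInv μ₀ ξ L) := by
  set J := rateFnInv μ₀ ξ L
  by_contra! h
  -- `κ := (1 + ε/2)/(1 + ε)` maps `(1 + ε) J` to a point beyond `J`
  set κ := (1 + ε / 2) / (1 + ε)
  have hκ : κ * (1 + ε) = 1 + ε / 2 := div_mul_cancel₀ _ (by linarith)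
  have hκ1 : κ ≤ 1 := (div_le_one (by linarith)).mpr (by linarith)
  have hscaled := hsym.rateFn_mul_le hξ (by positivity) hκ1 h
  rw [← mul_assoc, hκ] at hscaled
  have hbeyond := le_rateFn_of_rateFnInv_lt hsym hξ hfin
    (show J < (1 + ε / 2) * J by nlinarith)
  have := EReal.coe_le_coe_iff.mp (hbeyond.trans hscaled)
  have hκ' : κ * (1 + ε / 4) < 1 := by
    rw [div_mul_eq_mul_div, div_lt_one (by linarith)]
    nlinarith
  nlinarith

lemma rateFn_mul_rateFnInv_le (hsym : SymmetricRV μ₀ ξ) (hξ : Measurable ξ) {ε L : ℝ}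
    (hε0 : 0 < ε) (hε1 : ε < 1) (hJ : 0 < rateFnInv μ₀ ξ L) :
    rateFn μ₀ ξ ((1 - ε) * rateFnInv μ₀ ξ L) ≤ (((1 - ε) / (1 - ε / 2) * L : ℝ) : EReal) := by
  set J := rateFnInv μ₀ ξ L
  -- `(1 - ε) J` is the multiple `(1 - ε)/(1 - ε/2) ≤ 1` of the point `(1 - ε/2) J < J`
  have := hsym.rateFn_mul_le hξ (c := (1 - ε) / (1 - ε / 2))
    (div_nonneg (by linarith) (by linarith)) ((div_le_one (by linarith)).mpr (by linarith))
    (rateFn_lt_of_lt_rateFnInv (by nlinarith) (show (1 - ε / 2) * J < J by nlinarith)).le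
  rwa [← mul_assoc, div_mul_cancel₀ _ (by linarith)] at this

end RateFunction

section Assignment

open Finset

/-- The optimal value `W_n` of the assignment problem with weights `x`. -/
noncomputable def maxPermSum {n : ℕ} (x : Fin n × Fin n → ℝ) : ℝ :=
  ⨆ σ : Equiv.Perm (Fin n), ∑ i, x (i, σ i)

lemma sum_le_maxPermSum {n : ℕ} (x : Fin n × Fin n → ℝ) (σ : Equiv.Perm (Fin n)) :
    ∑ i, x (i, σ i) ≤ maxPermSum x :=
  le_ciSup (f := fun σ : Equiv.Perm (Fin n) => ∑ i, x (i, σ i)) (Set.finite_range _).bddAbove σ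

lemma lt_maxPermSum_iff {n : ℕ} {x : Fin n × Fin n → ℝ} {a : ℝ} :
    a < maxPermSum x ↔ ∃ σ : Equiv.Perm (Fin n), a < ∑ i, x (i, σ i) :=
  lt_ciSup_iff (Set.finite_range _).bddAbove

lemma maxPermSum_eq_zero {n : ℕ} {x : Fin n × Fin n → ℝ} (h : ∀ e, x e = 0) :
    maxPermSum x = 0 := by
  simp [maxPermSum, h]

lemma measure_maxPermSum_ne_zero_eq_zero {Ω : Type*} [MeasurableSpace Ω] {μ : Measure Ω}
    {n : ℕ} {X : Fin n × Fin n → Ω → ℝ} (hX : ∀ e, ∀ᵐ ω ∂μ, X e ω = 0) :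
    μ {ω | maxPermSum (fun e => X e ω) ≠ 0} = 0 :=
  measure_mono_null (fun _ hω h0 => hω (maxPermSum_eq_zero h0)) (ae_iff.mp (ae_all_iff.mpr hX))

lemma setOf_lt_abs_maxPermSum_sub_subset {Ω : Type*} {n : ℕ} (hn : 0 < n)
    (x : Ω → Fin n × Fin n → ℝ) (a ε : ℝ) :
    {ω | ε * (n * a) < |maxPermSum (x ω) - n * a|} ⊆
      {ω | n * ((1 + ε) * a) < maxPermSum (x ω)} ∪
        {ω | ¬∃ σ : Equiv.Perm (Fin n), ∀ i, (1 - ε) * a < x ω (i, σ i)} := by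
  intro ω hω
  by_contra h
  simp only [Set.mem_union, Set.mem_ofPred_eq, not_or, not_lt, not_not] at hω h
  obtain ⟨hup, σ, hσ⟩ := h
  have hsum : n * ((1 - ε) * a) < ∑ i, x ω (i, σ i) := by
    simpa using sum_lt_sum_of_nonempty (univ_nonempty_iff.mpr ⟨⟨0, hn⟩⟩) fun i _ => hσ i
  have := sum_le_maxPermSum (x ω) σ
  rcases lt_abs.mp hω with h' | h' <;> nlinarith

variable {Ω₀ : Type*} [MeasurableSpace Ω₀] {μ₀ : Measure Ω₀} [IsProbabilityMeasure μ₀]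
  {ξ : Ω₀ → ℝ} {Ω : Type*} [MeasurableSpace Ω] {μ : Measure Ω} [IsProbabilityMeasure μ]

lemma SymmetricRV.measure_le_sum_le (hsym : SymmetricRV μ₀ ξ) (hξ : Measurable ξ)
    {ι : Type*} {X : ι → Ω → ℝ} (hX : ∀ e, Measurable (X e)) (hind : iIndepFun X μ)
    (hid : ∀ e, IdentDistrib (X e) ξ μ μ₀) (M : Finset ι) {a b : ℝ} (ha : 0 ≤ a) (hb : 0 ≤ b)
    (hab : (b : EReal) < rateFn μ₀ ξ a) :
    μ {ω | #M * a ≤ ∑ e ∈ M, X e ω} ≤ ENNReal.ofReal (exp (-(#M * b))) := by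
  obtain ⟨s, hs⟩ := lt_iSup_iff.mp hab
  have hint := (lmgf_ne_top_iff (μ₀ := μ₀) (ξ := ξ) (s := s)).mp fun h => by
    simp [h] at hs
  rw [lmgf_of_integrable hint, ← EReal.coe_sub, EReal.coe_lt_coe_iff] at hs
  have hcgf : 0 ≤ cgf ξ μ₀ s := log_nonneg (hsym.one_le_mgf hξ hint)
  have hs0 : 0 ≤ s := by
    by_contra! hneg
    nlinarith [mul_nonpos_of_nonpos_of_nonneg hneg.le ha]
  have hexp e : IdentDistrib (fun ω => exp (s * X e ω)) (fun ω => exp (s * ξ ω)) μ μ₀ :=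
    (hid e).comp (measurable_exp.comp (measurable_const_mul s))
  have hmgf_eq e : mgf (X e) μ s = mgf ξ μ₀ s := (hexp e).integral_eq
  have hmgf : mgf (∑ e ∈ M, X e) μ s = exp (#M * cgf ξ μ₀ s) := by
    rw [hind.mgf_sum hX, prod_congr rfl fun e _ => hmgf_eq e, prod_const, exp_nat_mul,
      exp_cgf hint]
  have hchernoff := measure_ge_le_exp_mul_mgf (#M * a) hs0
    (hind.integrable_exp_mul_sum hX (s := M) fun e _ => (hexp e).integrable_iff.mpr hint)
  rw [hmgf, ← exp_add] at hchernoff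
  rw [← ofReal_measureReal]
  refine ENNReal.ofReal_le_ofReal ?_
  calc μ.real {ω | #M * a ≤ ∑ e ∈ M, X e ω}
      ≤ exp (-s * (#M * a) + #M * cgf ξ μ₀ s) := by simpa [Finset.sum_apply] using hchernoff
    _ ≤ exp (-(#M * b)) := exp_le_exp.mpr (by nlinarith [(#M).cast_nonneg (α := ℝ)])

lemma SymmetricRV.measure_lt_maxPermSum_le (hsym : SymmetricRV μ₀ ξ) (hξ : Measurable ξ)
    {n : ℕ} {X : Fin n × Fin n → Ω → ℝ} (hX : ∀ e, Measurable (X e)) (hind : iIndepFun X μ)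
    (hid : ∀ e, IdentDistrib (X e) ξ μ μ₀) {a b : ℝ} (ha : 0 ≤ a) (hb : 0 ≤ b)
    (hab : (b : EReal) < rateFn μ₀ ξ a) :
    μ {ω | n * a < maxPermSum (fun e => X e ω)} ≤ ENNReal.ofReal (exp (n * (log n - b))) := by
  let graph (σ : Equiv.Perm (Fin n)) : Finset (Fin n × Fin n) :=
    univ.map ⟨fun i => (i, σ i), fun _ _ h => (Prod.ext_iff.mp h).1⟩
  have hunion : {ω | n * a < maxPermSum (fun e => X e ω)} ⊆
      ⋃ σ ∈ (univ : Finset (Equiv.Perm (Fin n))),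
        {ω | #(graph σ) * a ≤ ∑ e ∈ graph σ, X e ω} := fun ω hω => by
    obtain ⟨σ, hσ⟩ := lt_maxPermSum_iff.mp hω
    simpa [graph] using ⟨σ, hσ.le⟩
  have hfact : (n.factorial : ℝ) ≤ exp (n * log n) := by
    rw [← log_pow, ← exp_log (by positivity : (0 : ℝ) < n.factorial)]
    exact exp_le_exp.mpr (log_le_log (by positivity) (by exact_mod_cast n.factorial_le_pow))
  calc μ {ω | n * a < maxPermSum (fun e => X e ω)}
      ≤ ∑ σ : Equiv.Perm (Fin n), μ {ω | #(graph σ) * a ≤ ∑ e ∈ graph σ, X e ω} :=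
        (measure_mono hunion).trans (measure_biUnion_finset_le _ _)
    _ ≤ ∑ _σ : Equiv.Perm (Fin n), ENNReal.ofReal (exp (-(n * b))) := by
        gcongr with σ
        simpa [graph] using hsym.measure_le_sum_le hξ hX hind hid (graph σ) ha hb hab
    _ = ENNReal.ofReal (n.factorial * exp (-(n * b))) := by
        rw [sum_const, card_univ, Fintype.card_perm, Fintype.card_fin, nsmul_eq_mul,
          ENNReal.ofReal_mul (by positivity), ENNReal.ofReal_natCast]
    _ ≤ ENNReal.ofReal (exp (n * (log n - b))) := by
        gcongr
        calc _ ≤ exp (n * log n) * exp (-(n * b)) := by gcongr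
          _ = _ := by rw [← exp_add]; ring_nf

end Assignment

section PerfectMatching

open Finset

lemma exists_hall_obstruction {n : ℕ} {r : Fin n → Fin n → Prop}
    (h : ¬∃ σ : Equiv.Perm (Fin n), ∀ i, r i (σ i)) :
    ∃ a < n, ∃ A B : Finset (Fin n), #A = a + 1 ∧ #B = a ∧ ∀ i ∈ A, ∀ j ∉ B, ¬r i j := by
  classical
  let N i := univ.filter (r i)
  have hhall : ¬∀ A : Finset (Fin n), #A ≤ #(A.biUnion N) := fun hall => by
    obtain ⟨f, hf, hfr⟩ := (all_card_le_biUnion_card_iff_exists_injective N).mp hall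
    exact h ⟨Equiv.ofBijective f (Finite.injective_iff_bijective.mp hf),
      fun i => (mem_filter.mp (hfr i)).2⟩
  push Not at hhall
  obtain ⟨A, hA⟩ := hhall
  have hAn : #A ≤ n := by simpa using card_le_univ A
  obtain ⟨B, hNB, hB⟩ := exists_superset_card_eq (n := #A - 1) (s := A.biUnion N) (by omega)
    (by simp only [Fintype.card_fin]; omega)
  exact ⟨#A - 1, by omega, A, B, by omega, hB, fun i hi j hj hij =>
    hj (hNB (mem_biUnion.mpr ⟨i, hi, mem_filter.mpr ⟨mem_univ _, hij⟩⟩))⟩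

lemma setOf_not_exists_perm_subset {Ω : Type*} {n : ℕ} (X : Fin n × Fin n → Ω → ℝ) (u : ℝ) :
    {ω | ¬∃ σ : Equiv.Perm (Fin n), ∀ i, u < X (i, σ i) ω} ⊆
      ⋃ a ∈ range n, ⋃ A ∈ powersetCard (a + 1) univ, ⋃ B ∈ powersetCard a univ,
        {ω | ∀ e ∈ A ×ˢ Bᶜ, X e ω ≤ u} := fun ω hω => by
  obtain ⟨a, ha, A, B, hA, hB, hAB⟩ :=
    exists_hall_obstruction (r := fun i j => u < X (i, j) ω) hω
  simp only [Set.mem_iUnion, mem_range, mem_powersetCard_univ]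
  refine ⟨a, ha, A, hA, B, hB, fun e he => ?_⟩
  obtain ⟨hi, hj⟩ := mem_product.mp he
  exact not_lt.mp (hAB _ hi _ (mem_compl.mp hj))

lemma choose_le_pow_min {n k : ℕ} (hk : k ≤ n) : n.choose k ≤ n ^ min k (n - k) := by
  rcases le_total k (n - k) with h | h
  · rw [min_eq_left h]
    exact Nat.choose_le_pow n k
  · rw [min_eq_right h, ← Nat.choose_symm hk]
    exact Nat.choose_le_pow n (n - k)

lemma choose_succ_mul_choose_mul_exp_le {n a : ℕ} (ha : a < n) {p : ℝ}
    (hp : 8 * log n ≤ n * p) :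
    (n.choose (a + 1) * n.choose a : ℝ) * exp (-(((a + 1) * (n - a) : ℕ) * p)) ≤
      exp (-(2 * log n)) := by
  set m := min (a + 1) (n - a)
  have hn : (1 : ℝ) ≤ n := by exact_mod_cast (show 1 ≤ n by omega)
  have hlog : 0 ≤ log n := log_nonneg hn
  have hp0 : 0 ≤ p := by nlinarith
  have hchoose {k : ℕ} (hk : k ≤ n) (hkm : min k (n - k) ≤ m) :
      (n.choose k : ℝ) ≤ exp (m * log n) :=
    calc (n.choose k : ℝ) ≤ ((n ^ min k (n - k) : ℕ) : ℝ) := by exact_mod_cast choose_le_pow_min hk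
      _ ≤ (n : ℝ) ^ m := by push_cast; exact pow_le_pow_right₀ hn hkm
      _ = exp (m * log n) := by rw [exp_nat_mul, exp_log (by linarith)]
  -- the larger of the two factors `a + 1`, `n - a` is at least `n / 2`
  have hmn : m * n ≤ 2 * ((a + 1) * (n - a)) := by
    rw [← min_mul_max (a + 1) (n - a)]
    have : n ≤ 2 * max (a + 1) (n - a) := by omega
    calc m * n ≤ m * (2 * max (a + 1) (n - a)) := Nat.mul_le_mul_left m this
      _ = 2 * (m * max (a + 1) (n - a)) := by ring
  have hm1 : (1 : ℝ) ≤ m := by exact_mod_cast (show 1 ≤ m by omega)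
  have hkp : 4 * (m * log n) ≤ ((a + 1) * (n - a) : ℕ) * p := by
    have : ((m * n : ℕ) : ℝ) ≤ ((2 * ((a + 1) * (n - a)) : ℕ) : ℝ) := by exact_mod_cast hmn
    push_cast at this ⊢
    nlinarith
  calc (n.choose (a + 1) * n.choose a : ℝ) * exp (-(((a + 1) * (n - a) : ℕ) * p))
      ≤ exp (m * log n) * exp (m * log n) * exp (-(4 * (m * log n))) := by
        gcongr
        · exact hchoose (by omega) (by omega)
        · exact hchoose ha.le (by omega)
    _ = exp (-(2 * (m * log n))) := by rw [← exp_add, ← exp_add]; ring_nf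
    _ ≤ exp (-(2 * log n)) := by gcongr; nlinarith

variable {Ω : Type*} [MeasurableSpace Ω] {μ : Measure Ω} [IsProbabilityMeasure μ]

lemma ProbabilityTheory.iIndepFun.measure_forall_le_le {ι : Type*} {X : ι → Ω → ℝ}
    (hX : ∀ e, Measurable (X e)) (hind : iIndepFun X μ) {u p : ℝ} (hp0 : 0 ≤ p)
    (hp : ∀ e, ENNReal.ofReal p ≤ μ {ω | u < X e ω}) (S : Finset ι) :
    μ {ω | ∀ e ∈ S, X e ω ≤ u} ≤ ENNReal.ofReal (exp (-(#S * p))) := by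
  have hone e : μ (X e ⁻¹' Set.Iic u) ≤ ENNReal.ofReal (exp (-p)) := by
    have : X e ⁻¹' Set.Iic u = {ω | u < X e ω}ᶜ := by ext; simp
    rw [this, prob_compl_eq_one_sub (s := {ω | u < X e ω}) (hX e measurableSet_Ioi)]
    calc 1 - μ {ω | u < X e ω} ≤ 1 - ENNReal.ofReal p := tsub_le_tsub_left (hp e) 1
      _ = ENNReal.ofReal (1 - p) := by rw [ENNReal.ofReal_sub 1 hp0, ENNReal.ofReal_one]
      _ ≤ ENNReal.ofReal (exp (-p)) := ENNReal.ofReal_le_ofReal (one_sub_le_exp_neg p)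
  have hset : {ω | ∀ e ∈ S, X e ω ≤ u} = ⋂ e ∈ S, X e ⁻¹' Set.Iic u := by ext; simp
  rw [hset, hind.measure_inter_preimage_eq_mul S fun _ _ => measurableSet_Iic]
  calc ∏ e ∈ S, μ (X e ⁻¹' Set.Iic u) ≤ ∏ _e ∈ S, ENNReal.ofReal (exp (-p)) :=
        prod_le_prod' fun e _ => hone e
    _ = ENNReal.ofReal (exp (-(#S * p))) := by
        rw [prod_const, ← ENNReal.ofReal_pow (exp_pos _).le, ← exp_nat_mul, mul_neg]

lemma ProbabilityTheory.iIndepFun.measure_not_exists_perm_le {n : ℕ} (hn : 0 < n)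
    {X : Fin n × Fin n → Ω → ℝ} (hX : ∀ e, Measurable (X e)) (hind : iIndepFun X μ)
    {u p : ℝ} (hp0 : 0 ≤ p) (hp : ∀ e, ENNReal.ofReal p ≤ μ {ω | u < X e ω})
    (hnp : 8 * log n ≤ n * p) :
    μ {ω | ¬∃ σ : Equiv.Perm (Fin n), ∀ i, u < X (i, σ i) ω} ≤ ENNReal.ofReal (n⁻¹) := by
  let E (A B : Finset (Fin n)) := {ω | ∀ e ∈ A ×ˢ Bᶜ, X e ω ≤ u}
  have hE a (A B : Finset (Fin n)) (hA : #A = a + 1) (hB : #B = a) :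
      μ (E A B) ≤ ENNReal.ofReal (exp (-(((a + 1) * (n - a) : ℕ) * p))) := by
    have := hind.measure_forall_le_le hX hp0 hp (A ×ˢ Bᶜ)
    rwa [card_product, card_compl, hA, hB, Fintype.card_fin] at this
  have hnpos : (0 : ℝ) < n := by exact_mod_cast hn
  calc μ {ω | ¬∃ σ : Equiv.Perm (Fin n), ∀ i, u < X (i, σ i) ω}
      ≤ ∑ a ∈ range n, ∑ A ∈ powersetCard (a + 1) univ, ∑ B ∈ powersetCard a univ,
          μ (E A B) :=
        (measure_mono (setOf_not_exists_perm_subset X u)).trans <|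
          (measure_biUnion_finset_le _ _).trans <|
            sum_le_sum fun a _ => (measure_biUnion_finset_le _ _).trans <|
              sum_le_sum fun A _ => measure_biUnion_finset_le _ _
    _ ≤ ∑ a ∈ range n, ∑ A ∈ powersetCard (a + 1) univ, ∑ B ∈ powersetCard a univ,
          ENNReal.ofReal (exp (-(((a + 1) * (n - a) : ℕ) * p))) := by
        gcongr with a _ A hA B hB
        exact hE a A B (mem_powersetCard_univ.mp hA) (mem_powersetCard_univ.mp hB)
    _ = ∑ a ∈ range n, ENNReal.ofReal
          ((n.choose (a + 1) * n.choose a : ℝ) * exp (-(((a + 1) * (n - a) : ℕ) * p))) := by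
        refine sum_congr rfl fun a _ => ?_
        rw [ENNReal.ofReal_mul (by positivity), ENNReal.ofReal_mul (by positivity)]
        simp [card_powersetCard, mul_assoc]
    _ ≤ ∑ _a ∈ range n, ENNReal.ofReal (exp (-(2 * log n))) := by
        gcongr with a ha
        exact choose_succ_mul_choose_mul_exp_le (mem_range.mp ha) hnp
    _ = ENNReal.ofReal (n⁻¹) := by
        rw [sum_const, card_range, nsmul_eq_mul, ← ENNReal.ofReal_natCast,
          ← ENNReal.ofReal_mul hnpos.le, exp_neg, show (2 : ℝ) = (2 : ℕ) by norm_num,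
          exp_nat_mul, exp_log hnpos]
        congr 1
        field_simp

end PerfectMatching

section Asymptotics

variable {Ω₀ : Type*} [MeasurableSpace Ω₀] {μ₀ : Measure Ω₀} [IsProbabilityMeasure μ₀]
  {ξ : Ω₀ → ℝ}

lemma eventually_log_le_mul_measure_gt_of_bddAbove (hξ : Measurable ξ) {ε : ℝ} (hε0 : 0 < ε)
    (hε1 : ε < 1) (hbdd : BddAbove (Set.range (rateFnInv μ₀ ξ)))
    (hpos : ∃ c, 0 < rateFnInv μ₀ ξ c) :
    ∀ᶠ n : ℕ in atTop,
      8 * log n ≤ n * μ₀.real {ω | (1 - ε) * rateFnInv μ₀ ξ (log n) < ξ ω} := by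
  set I := ⨆ c, rateFnInv μ₀ ξ c
  have hJI c : rateFnInv μ₀ ξ c ≤ I := le_ciSup hbdd c
  obtain ⟨c₀, hc₀⟩ := hpos
  have hI : 0 < I := hc₀.trans_le (hJI c₀)
  obtain ⟨c₁, hc₁⟩ := exists_lt_of_lt_ciSup (show (1 - ε) * I < I by nlinarith)
  set p := μ₀.real {ω | (1 - ε) * I < ξ ω}
  have hp : 0 < p := ENNReal.toReal_pos
    (measure_gt_pos_of_lt_rateFnInv hξ (by nlinarith) hc₁).ne' (measure_ne_top _ _)
  filter_upwards [tendsto_natCast_atTop_atTop.eventually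
    (isLittleO_log_id_atTop.bound (by positivity : 0 < p / 8))] with n hn
  have hpn : p ≤ μ₀.real {ω | (1 - ε) * rateFnInv μ₀ ξ (log n) < ξ ω} :=
    measureReal_mono fun ω hω =>
      lt_of_le_of_lt (mul_le_mul_of_nonneg_left (hJI _) (by linarith)) hω
  rw [norm_of_nonneg (log_natCast_nonneg n), id, norm_of_nonneg n.cast_nonneg] at hn
  nlinarith [n.cast_nonneg (α := ℝ)]

lemma SymmetricRV.eventually_log_le_mul_measure_gt_of_tendsto (hsym : SymmetricRV μ₀ ξ)
    (hξ : Measurable ξ) (htails : RegularUpperTails μ₀ ξ) {ε : ℝ} (hε0 : 0 < ε) (hε1 : ε < 1)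
    (htop : Tendsto (rateFnInv μ₀ ξ) atTop atTop) :
    ∀ᶠ n : ℕ in atTop,
      8 * log n ≤ n * μ₀.real {ω | (1 - ε) * rateFnInv μ₀ ξ (log n) < ξ ω} := by
  have hJ : Tendsto (fun n : ℕ => rateFnInv μ₀ ξ (log n)) atTop atTop :=
    htop.comp (tendsto_log_atTop.comp tendsto_natCast_atTop_atTop)
  set c := (1 - ε) / (1 - ε / 2)
  have hc1 : c < 1 := (div_lt_one (by linarith)).mpr (by linarith)
  set δ := (1 - c) / 2
  have hδ : 0 < δ := by positivity
  obtain ⟨T, hT⟩ := (htails δ hδ).exists_forall_of_atTop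
  filter_upwards [(hJ.const_mul_atTop (by linarith : 0 < 1 - ε)).eventually_ge_atTop T,
    hJ.eventually_gt_atTop 0, eventually_gt_atTop 0, tendsto_natCast_atTop_atTop.eventually
      ((isLittleO_log_rpow_atTop hδ).bound (by norm_num : (0 : ℝ) < 1 / 8))]
    with n hTn hJ hn hlog
  set J := rateFnInv μ₀ ξ (log n)
  have hnpos : (0 : ℝ) < n := by exact_mod_cast hn
  obtain ⟨r, hr, hrc⟩ := exists_rateFn_eq_coe (rateFn_mul_rateFnInv_le hsym hξ hε0 hε1 hJ)
  have htail := (hT _ hTn r hr).1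
  have hlogn := log_natCast_nonneg n
  rw [norm_of_nonneg hlogn, norm_of_nonneg (rpow_nonneg hnpos.le _),
    rpow_def_of_pos hnpos] at hlog
  calc 8 * log n ≤ exp (log n * δ) := by linarith
    _ = n * exp (-(1 - δ) * log n) := by
        rw [← exp_log hnpos, ← exp_add, log_exp]
        ring_nf
    _ ≤ n * μ₀.real {ω | (1 - ε) * J < ξ ω} := by
        refine mul_le_mul_of_nonneg_left (le_trans (exp_le_exp.mpr ?_) htail) hnpos.le
        have hδc : (1 + δ) * c ≤ 1 - δ := by
          simp only [δ]
          nlinarith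
        nlinarith [mul_le_mul_of_nonneg_left hrc (by linarith : (0 : ℝ) ≤ 1 + δ),
          mul_le_mul_of_nonneg_right hδc hlogn]

lemma SymmetricRV.eventually_log_le_mul_measure_gt (hsym : SymmetricRV μ₀ ξ) (hξ : Measurable ξ)
    (hfin : FiniteLmgfNearZero μ₀ ξ) (htails : RegularUpperTails μ₀ ξ) {ε : ℝ} (hε0 : 0 < ε)
    (hε1 : ε < 1) (hpos : ∃ c, 0 < rateFnInv μ₀ ξ c) :
    ∀ᶠ n : ℕ in atTop,
      8 * log n ≤ n * μ₀.real {ω | (1 - ε) * rateFnInv μ₀ ξ (log n) < ξ ω} := by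
  by_cases hbdd : BddAbove (Set.range (rateFnInv μ₀ ξ))
  · exact eventually_log_le_mul_measure_gt_of_bddAbove hξ hε0 hε1 hbdd hpos
  · exact hsym.eventually_log_le_mul_measure_gt_of_tendsto hξ htails hε0 hε1
      (tendsto_atTop_atTop_of_monotone' (rateFnInv_mono hfin) hbdd)

variable {Ω : ℕ → Type*} [∀ n, MeasurableSpace (Ω n)] {μ : ∀ n, Measure (Ω n)}
  [∀ n, IsProbabilityMeasure (μ n)] {X : ∀ n, Fin n × Fin n → Ω n → ℝ}

lemma SymmetricRV.tendsto_measure_lt_maxPermSum (hsym : SymmetricRV μ₀ ξ) (hξ : Measurable ξ)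
    (hfin : FiniteLmgfNearZero μ₀ ξ) (hX : ∀ n e, Measurable (X n e))
    (hind : ∀ n, iIndepFun (X n) (μ n)) (hid : ∀ n e, IdentDistrib (X n e) ξ (μ n) μ₀)
    {ε : ℝ} (hε0 : 0 < ε) (hε1 : ε < 1) (hJ : ∀ᶠ n : ℕ in atTop, 0 < rateFnInv μ₀ ξ (log n)) :
    Tendsto (fun n : ℕ => μ n {ω | n * ((1 + ε) * rateFnInv μ₀ ξ (log n)) <
      maxPermSum (fun e => X n e ω)}) atTop (𝓝 0) := by
  have hnlogn : Tendsto (fun n : ℕ => (n : ℝ) * log n) atTop atTop :=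
    tendsto_natCast_atTop_atTop.atTop_mul_atTop₀
      (tendsto_log_atTop.comp tendsto_natCast_atTop_atTop)
  have hbound : Tendsto (fun n : ℕ => exp (n * (log n - (1 + ε / 4) * log n))) atTop (𝓝 0) := by
    refine (tendsto_exp_atBot.comp (tendsto_neg_atTop_atBot.comp
      (hnlogn.const_mul_atTop (by positivity : 0 < ε / 4)))).congr fun n => ?_
    simp only [Function.comp_apply]
    ring_nf
  refine tendsto_of_tendsto_of_tendsto_of_le_of_le' tendsto_const_nhds
    (by simpa using ENNReal.tendsto_ofReal hbound) (.of_forall fun _ => zero_le) ?_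
  filter_upwards [hJ, eventually_gt_atTop 1] with n hJn hn
  have hlog : 0 < log n := log_pos (by exact_mod_cast hn)
  exact hsym.measure_lt_maxPermSum_le hξ (hX n) (hind n) (hid n) (by positivity) (by positivity)
    (mul_lt_rateFn_mul_rateFnInv hsym hξ hfin hε0 hε1 hlog hJn)

lemma SymmetricRV.tendsto_measure_not_exists_perm (hsym : SymmetricRV μ₀ ξ) (hξ : Measurable ξ)
    (hfin : FiniteLmgfNearZero μ₀ ξ) (htails : RegularUpperTails μ₀ ξ)
    (hX : ∀ n e, Measurable (X n e)) (hind : ∀ n, iIndepFun (X n) (μ n))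
    (hid : ∀ n e, IdentDistrib (X n e) ξ (μ n) μ₀) {ε : ℝ} (hε0 : 0 < ε) (hε1 : ε < 1)
    (hpos : ∃ c, 0 < rateFnInv μ₀ ξ c) :
    Tendsto (fun n : ℕ => μ n {ω | ¬∃ σ : Equiv.Perm (Fin n),
      ∀ i, (1 - ε) * rateFnInv μ₀ ξ (log n) < X n (i, σ i) ω}) atTop (𝓝 0) := by
  refine tendsto_of_tendsto_of_tendsto_of_le_of_le' tendsto_const_nhds
    (by simpa using ENNReal.tendsto_ofReal tendsto_inv_atTop_nhds_zero_nat)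
    (.of_forall fun _ => zero_le) ?_
  filter_upwards [hsym.eventually_log_le_mul_measure_gt hξ hfin htails hε0 hε1 hpos,
    eventually_gt_atTop 0] with n hnp hn
  refine (hind n).measure_not_exists_perm_le hn (hX n) measureReal_nonneg (fun e => ?_) hnp
  rw [ofReal_measureReal]
  exact ((hid n e).measure_mem_eq measurableSet_Ioi).ge

end Asymptotics

/-- with i.i.d. good edge weights on `K_{n,n}`, the maximal weight `W_n` of a
perfect matching satisfies `W_n = (1 + o(1)) n Λ*⁻¹(log n)` with high probability. -/
theorem assignment_whp {Ω₀ : Type*} [MeasurableSpace Ω₀] (μ₀ : Measure Ω₀)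
    [IsProbabilityMeasure μ₀] (ξ : Ω₀ → ℝ) (hξ : Measurable ξ) (hgood : Good μ₀ ξ)
    {Ω : ℕ → Type*} [∀ n, MeasurableSpace (Ω n)] (μ : ∀ n, Measure (Ω n))
    [∀ n, IsProbabilityMeasure (μ n)]
    (X : ∀ n, Fin n × Fin n → Ω n → ℝ) (hmeas : ∀ n e, Measurable (X n e))
    (hind : ∀ n, iIndepFun (X n) (μ n))
    (hid : ∀ n e, IdentDistrib (X n e) ξ (μ n) μ₀)
    (ε : ℝ) (hε : 0 < ε) :
    Tendsto (fun n : ℕ => μ n {ω |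
        ε * ((n : ℝ) * rateFnInv μ₀ ξ (Real.log n)) <
          |(⨆ σ : Equiv.Perm (Fin n), ∑ i, X n (i, σ i) ω) -
            (n : ℝ) * rateFnInv μ₀ ξ (Real.log n)|}) atTop (nhds 0) := by
  obtain ⟨hsym, hfin, htails⟩ := hgood
  wlog hε1 : ε < 1 generalizing ε
  · refine tendsto_of_tendsto_of_tendsto_of_le_of_le tendsto_const_nhds
      (this (1 / 2) (by norm_num) (by norm_num)) (fun _ => zero_le) fun n => measure_mono ?_
    refine fun ω hω => lt_of_le_of_lt (mul_le_mul_of_nonneg_right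
      (show (1 / 2 : ℝ) ≤ ε by linarith [not_lt.mp hε1]) ?_) hω
    exact mul_nonneg n.cast_nonneg (rateFnInv_nonneg _)
  change Tendsto (fun n : ℕ => μ n {ω | ε * (n * rateFnInv μ₀ ξ (log n)) <
    |maxPermSum (fun e => X n e ω) - n * rateFnInv μ₀ ξ (log n)|}) atTop (𝓝 0)
  by_cases hξ0 : ∀ᵐ ω ∂μ₀, ξ ω = 0
  · simp only [rateFnInv_eq_zero_of_ae_eq_zero hξ hξ0, mul_zero, sub_zero, abs_pos]
    exact tendsto_const_nhds.congr fun n => (measure_maxPermSum_ne_zero_eq_zero fun e =>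
      (hid n e).symm.ae_snd (measurableSet_singleton 0) hξ0).symm
  obtain ⟨w, hw, hξw⟩ := hsym.exists_pos_measure_gt hξ hξ0
  have hJ := (hsym.eventually_le_rateFnInv_log hξ hfin hξw).mono fun n hn => hw.trans_le hn
  obtain ⟨n₀, hn₀⟩ := hJ.exists
  have hupper := hsym.tendsto_measure_lt_maxPermSum hξ hfin hmeas hind hid hε hε1 hJ
  have hlower := hsym.tendsto_measure_not_exists_perm hξ hfin htails hmeas hind hid hε hε1
    ⟨_, hn₀⟩
  refine tendsto_of_tendsto_of_tendsto_of_le_of_le' tendsto_const_nhds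
    (by simpa only [add_zero] using hupper.add hlower) (.of_forall fun _ => zero_le) ?_
  filter_upwards [eventually_gt_atTop 0] with n hn
  exact (measure_mono (setOf_lt_abs_maxPermSum_sub_subset hn _ _ _)).trans
    (measure_union_le _ _)
end

section
/- Fix sequences 0 = x₀ < x₁ < x₂ < ⋯ with x_n → ∞ and y_n = 2^{n²} for n ≥ 1, y₀ = log 2, chosen so that Σ_n exp(t x_n − y_{n−1}) < ∞ for every t > 0. Let X be the symmetric random variable with P(X > t) = Σ_{n≥0} e^{−y_n} 1_{[x_n, x_{n+1})}(t) for t ≥ 0. Then Λ(t) < ∞ for all t ∈ ℝ, but limsup_{t→∞} (−log P(X > t))/Λ*(t) = +∞; in particular X does not have regular upper tails. -/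
/-!
Chernoff's bound at the left end `x_{n+1}` of a plateau of the tail gives
`Λ*(x_{n+1}) ≤ -log P(X ≥ x_{n+1}) = y_n`. Just to the right of `x_{n+1}` the tail drops to
`e^{-y_{n+1}}`, and `y_{n+1} = 2^{2n+1} y_n`, so `-log P(X > t) / Λ*(t)` is unbounded along
`t = x_{n+1}`. `Λ` is finite since `E e^{tX} ≤ 1 + Σ e^{t x_{n+1}} P(X > x_n)`.
-/

open MeasureTheory ProbabilityTheory Real Filter

open Set

section

variable {Ω : Type*} [MeasurableSpace Ω] {μ : Measure Ω} {X : Ω → ℝ}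

lemma lmgf_eq_cgf {s : ℝ} (h : Integrable (fun ω => exp (s * X ω)) μ) :
    lmgf μ X s = (cgf X μ s : EReal) := by
  rw [lmgf, if_pos h]
  rfl

lemma rateFn_nonneg_s19 [IsProbabilityMeasure μ] (t : ℝ) : 0 ≤ rateFn μ X t :=
  le_iSup_of_le 0 <| by
    rw [lmgf_eq_cgf (by simp : Integrable (fun ω => exp (0 * X ω)) μ), cgf_zero]
    simp

lemma exists_mem_Ioc_succ_of_tendsto {x : ℕ → ℝ} (hxtop : Tendsto x atTop atTop) {u : ℝ}
    (hu : x 0 < u) : ∃ n, u ∈ Ioc (x n) (x (n + 1)) := by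
  classical
  have hex : ∃ m, u ≤ x m := (hxtop.eventually_ge_atTop u).exists
  obtain ⟨n, hn⟩ : ∃ n, Nat.find hex = n + 1 :=
    Nat.exists_eq_add_one.mpr <| Nat.pos_of_ne_zero fun h => by
      have := Nat.find_spec hex
      rw [h] at this
      linarith
  exact ⟨n, not_le.mp (Nat.find_min hex (by omega)), hn ▸ Nat.find_spec hex⟩

lemma integrable_exp_mul_of_summable_tail [IsFiniteMeasure μ] (hX : Measurable X)
    {x : ℕ → ℝ} (hx0 : x 0 = 0) (hxtop : Tendsto x atTop atTop) {t : ℝ} (ht : 0 ≤ t)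
    (hsum : Summable fun n => exp (t * x (n + 1)) * μ.real {ω | x n < X ω}) :
    Integrable (fun ω => exp (t * X ω)) μ := by
  set S : ℕ → Set Ω := fun n => {ω | x n < X ω}
  have hS : ∀ n, MeasurableSet (S n) := fun n => hX measurableSet_Ioi
  have hbound : ∀ ω, ENNReal.ofReal (exp (t * X ω)) ≤
      1 + ∑' n, (S n).indicator (fun _ => ENNReal.ofReal (exp (t * x (n + 1)))) ω := by
    intro ω
    rcases le_or_gt (X ω) 0 with hω | hω
    · refine le_add_right (ENNReal.ofReal_le_one.mpr (exp_le_one_iff.mpr ?_))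
      exact mul_nonpos_of_nonneg_of_nonpos ht hω
    · obtain ⟨n, hn⟩ := exists_mem_Ioc_succ_of_tendsto hxtop (hx0 ▸ hω)
      refine le_add_left (le_trans ?_ (ENNReal.le_tsum n))
      rw [indicator_of_mem (show ω ∈ S n from hn.1)]
      exact ENNReal.ofReal_le_ofReal (exp_le_exp.mpr (mul_le_mul_of_nonneg_left hn.2 ht))
  refine ⟨by fun_prop, ?_⟩
  rw [hasFiniteIntegral_iff_ofReal (ae_of_all _ fun ω => (exp_pos _).le)]
  calc ∫⁻ ω, ENNReal.ofReal (exp (t * X ω)) ∂μ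
      ≤ ∫⁻ ω, 1 + ∑' n, (S n).indicator (fun _ => ENNReal.ofReal (exp (t * x (n + 1)))) ω ∂μ :=
        lintegral_mono hbound
    _ = μ univ + ∑' n, ENNReal.ofReal (exp (t * x (n + 1)) * μ.real (S n)) := by
        rw [lintegral_add_left measurable_const, lintegral_one,
          lintegral_tsum fun n => (measurable_const.indicator (hS n)).aemeasurable]
        congr 1
        refine tsum_congr fun n => ?_
        rw [lintegral_indicator_const (hS n), ENNReal.ofReal_mul (exp_pos _).le, measureReal_def,
          ENNReal.ofReal_toReal (measure_ne_top μ _)]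
    _ < ⊤ := by
        rw [← ENNReal.ofReal_tsum_of_nonneg (fun n => by positivity) hsum]
        exact ENNReal.add_lt_top.mpr ⟨measure_lt_top μ _, ENNReal.ofReal_lt_top⟩

lemma measure_le_eq_of_measure_lt_eq [IsFiniteMeasure μ] (hX : Measurable X) {a b : ℝ}
    {c : ENNReal} (hba : b < a) (h : ∀ t ∈ Ico b a, μ {ω | t < X ω} = c) :
    μ {ω | a ≤ X ω} = c := by
  set s : ℝ → Set Ω := fun r => {ω | a - r < X ω}
  have hinter : ⋂ r > 0, s r = {ω | a ≤ X ω} := by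
    ext ω
    simp only [s, mem_iInter, mem_ofPred_eq]
    refine ⟨fun hω => le_of_forall_pos_lt_add fun ε hε => ?_, fun hω r hr => by linarith⟩
    linarith [hω ε hε]
  have hlim := tendsto_measure_biInter_gt (μ := μ) (s := s) (a := 0)
    (fun r _ => (hX measurableSet_Ioi).nullMeasurableSet)
    (fun i j _ hij ω hω => by simp only [s, mem_ofPred_eq] at hω ⊢; linarith)
    ⟨1, one_pos, measure_ne_top μ _⟩
  rw [hinter] at hlim
  refine tendsto_nhds_unique hlim (tendsto_const_nhds.congr' ?_)
  filter_upwards [Ioo_mem_nhdsGT (sub_pos.mpr hba)] with r hr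
  exact (h (a - r) ⟨by linarith [hr.2], by linarith [hr.1]⟩).symm

namespace SymmetricRV

lemma identDistrib_neg_s19 (hsym : SymmetricRV μ X) (hX : Measurable X) :
    IdentDistrib X (fun ω => -X ω) μ μ :=
  ⟨hX.aemeasurable, hX.neg.aemeasurable, hsym⟩

lemma cgf_neg (hsym : SymmetricRV μ X) (hX : Measurable X) (t : ℝ) :
    cgf X μ (-t) = cgf X μ t := by
  rw [← ProbabilityTheory.cgf_neg, cgf, cgf, mgf_congr_identDistrib (hsym.identDistrib_neg_s19 hX)]
  rfl

lemma integrable_exp_mul [IsFiniteMeasure μ] (hsym : SymmetricRV μ X) (hX : Measurable X)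
    (hpos : ∀ t, 0 < t → Integrable (fun ω => exp (t * X ω)) μ) (t : ℝ) :
    Integrable (fun ω => exp (t * X ω)) μ := by
  rcases lt_trichotomy t 0 with ht | rfl | ht
  · have hu : Measurable fun u : ℝ => exp (-t * u) := by fun_prop
    have := ((hsym.identDistrib_neg_s19 hX).comp hu).integrable_iff.mp (hpos (-t) (by linarith))
    simpa [Function.comp_def] using this
  · simp
  · exact hpos t ht

lemma rateFn_le_neg_log_measure_ge [IsFiniteMeasure μ] (hsym : SymmetricRV μ X)
    (hX : Measurable X) (hint : ∀ s, Integrable (fun ω => exp (s * X ω)) μ) {a : ℝ}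
    (ha : 0 ≤ a) (hpos : 0 < μ.real {ω | a ≤ X ω}) :
    rateFn μ X a ≤ ((-log (μ.real {ω | a ≤ X ω}) : ℝ) : EReal) := by
  have chernoff : ∀ s, 0 ≤ s → log (μ.real {ω | a ≤ X ω}) ≤ -s * a + cgf X μ s :=
    fun s hs => (log_le_iff_le_exp hpos).mpr (measure_ge_le_exp_cgf a hs (hint s))
  refine iSup_le fun s => ?_
  rw [lmgf_eq_cgf (hint s), ← EReal.coe_sub, EReal.coe_le_coe_iff]
  rcases le_or_gt 0 s with hs | hs
  · linarith [chernoff s hs]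
  · -- `Λ` is even, so the Chernoff bound at `-s` controls the term at `s`.
    have := chernoff (-s) (by linarith)
    rw [hsym.cgf_neg hX] at this
    nlinarith [mul_nonpos_of_nonpos_of_nonneg hs.le ha]

end SymmetricRV

lemma frequently_rateFn_le_of_tail_gap {a r : ℕ → ℝ} (ha : Tendsto a atTop atTop)
    (hrate : ∀ n, rateFn μ X (a n) ≤ r n)
    (hgap : ∀ C, ∀ᶠ n in atTop, 0 < r n ∧ C * r n ≤ -log (μ {ω | a n < X ω}).toReal) (C : ℝ) :
    ∃ᶠ t in atTop, ∃ r : ℝ, 0 < r ∧ rateFn μ X t ≤ r ∧ C * r ≤ -log (μ {ω | t < X ω}).toReal :=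
  ha.frequently <| ((hgap C).mono fun n hn => ⟨r n, hn.1, hrate n, hn.2⟩).frequently

lemma not_regularUpperTails_of_frequently [IsProbabilityMeasure μ]
    (h : ∃ᶠ t in atTop, ∃ r : ℝ, 0 < r ∧ rateFn μ X t ≤ r ∧
      3 * r ≤ -log (μ {ω | t < X ω}).toReal) :
    ¬ RegularUpperTails μ X := by
  intro hreg
  obtain ⟨t, ⟨r, hr, hrate, hgap⟩, hregt⟩ := (h.and_eventually (hreg 1 one_pos)).exists
  obtain ⟨v, hv⟩ : ∃ v : ℝ, rateFn μ X t = v :=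
    ⟨_, (EReal.coe_toReal (hrate.trans_lt (EReal.coe_lt_top r)).ne
      ((EReal.bot_lt_zero.trans_le (rateFn_nonneg_s19 t)).ne')).symm⟩
  have hvr : v ≤ r := by exact_mod_cast hv ▸ hrate
  have hlow := log_le_log (exp_pos _) (hregt v hv).1
  rw [log_exp] at hlow
  linarith

end

lemma eventually_mul_two_pow_sq_le_two_pow_succ_sq (C : ℝ) :
    ∀ᶠ n : ℕ in atTop, C * 2 ^ (n ^ 2) ≤ (2 : ℝ) ^ ((n + 1) ^ 2) := by
  obtain ⟨M, hM⟩ := exists_nat_ge C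
  filter_upwards [eventually_ge_atTop M] with n hn
  have hC : C ≤ (2 : ℝ) ^ (2 * n + 1) := calc
    C ≤ n := hM.trans (by exact_mod_cast hn)
    _ ≤ 2 ^ n := by exact_mod_cast n.lt_two_pow_self.le
    _ ≤ 2 ^ (2 * n + 1) := pow_le_pow_right₀ one_le_two (by omega)
  rw [show (n + 1) ^ 2 = 2 * n + 1 + n ^ 2 by ring, pow_add]
  exact mul_le_mul_of_nonneg_right hC (by positivity)

theorem no_regular_upper_tails_general {Ω : Type*} [MeasurableSpace Ω] (μ : Measure Ω)
    [IsProbabilityMeasure μ] (X : Ω → ℝ) (hX : Measurable X)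
    (x : ℕ → ℝ) (hx0 : x 0 = 0) (hxmono : StrictMono x) (hxtop : Tendsto x atTop atTop)
    (y : ℕ → ℝ)
    (hy : ∀ n : ℕ, 1 ≤ n → y n = (2 : ℝ) ^ (n ^ 2))
    (hsum : ∀ t : ℝ, 0 < t → Summable (fun n : ℕ => Real.exp (t * x (n + 1) - y n)))
    (hsym : SymmetricRV μ X)
    (htail : ∀ t : ℝ, 0 ≤ t → ∀ n : ℕ, x n ≤ t → t < x (n + 1) →
      (μ {ω | t < X ω}).toReal = Real.exp (-(y n))) :
    (∀ t : ℝ, lmgf μ X t ≠ ⊤) ∧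
    (∀ C : ℝ, 0 < C → ∃ᶠ t in atTop, ∃ r : ℝ, 0 ≤ r ∧ rateFn μ X t ≤ (r : EReal) ∧
      C * r ≤ -Real.log ((μ {ω | t < X ω}).toReal)) ∧
    ¬ RegularUpperTails μ X := by
  have hx_nonneg : ∀ n, 0 ≤ x n := fun n => hx0 ▸ hxmono.monotone n.zero_le
  have htail_at : ∀ n, μ.real {ω | x n < X ω} = exp (-y n) := fun n =>
    htail _ (hx_nonneg n) n le_rfl (hxmono n.lt_succ_self)
  have htail_le : ∀ n, μ.real {ω | x (n + 1) ≤ X ω} = exp (-y n) := fun n => by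
    have hplateau : ∀ t ∈ Ico (x n) (x (n + 1)),
        μ {ω | t < X ω} = ENNReal.ofReal (exp (-y n)) := fun t ht => by
      rw [← htail t ((hx_nonneg n).trans ht.1) n ht.1 ht.2,
        ENNReal.ofReal_toReal (measure_ne_top _ _)]
    rw [measureReal_def, measure_le_eq_of_measure_lt_eq hX (hxmono n.lt_succ_self) hplateau,
      ENNReal.toReal_ofReal (exp_pos _).le]
  have hint : ∀ t, Integrable (fun ω => exp (t * X ω)) μ :=
    hsym.integrable_exp_mul hX fun t ht =>
      integrable_exp_mul_of_summable_tail hX hx0 hxtop ht.le <| (hsum t ht).congr fun n => by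
        rw [htail_at, ← exp_add, sub_eq_add_neg]
  have hrate : ∀ n, rateFn μ X (x (n + 1)) ≤ y n := fun n => by
    have := hsym.rateFn_le_neg_log_measure_ge hX hint (hx_nonneg _) ((htail_le n).symm ▸ exp_pos _)
    rwa [htail_le n, log_exp, neg_neg] at this
  have hgap : ∀ C, ∀ᶠ n in atTop, 0 < y n ∧ C * y n ≤ -log (μ {ω | x (n + 1) < X ω}).toReal :=
    fun C => by
      filter_upwards [eventually_ge_atTop 1, eventually_mul_two_pow_sq_le_two_pow_succ_sq C]
        with n hn hC
      rw [← measureReal_def, htail_at, log_exp, neg_neg, hy n hn, hy (n + 1) (by omega)]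
      exact ⟨by positivity, by exact_mod_cast hC⟩
  have hfreq := frequently_rateFn_le_of_tail_gap (hxtop.comp (tendsto_add_atTop_nat 1)) hrate hgap
  refine ⟨fun t => by simp [lmgf_eq_cgf (hint t)], fun C _ => ?_, ?_⟩
  · exact (hfreq C).mono fun t ⟨r, hr, hle⟩ => ⟨r, hr.le, hle⟩
  · exact not_regularUpperTails_of_frequently (hfreq 3)

/-- a symmetric random variable `X` with `P(X > t) = e^{-y_n}` on
`[x_n, x_{n+1})`, where `y_n = 2^{n²}` grows fast enough, has `Λ(t) < ∞` for all `t` but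
`limsup_{t→∞} (-log P(X > t))/Λ*(t) = ∞`; in particular `X` does not have regular upper
tails. -/
theorem no_regular_upper_tails {Ω : Type*} [MeasurableSpace Ω] (μ : Measure Ω)
    [IsProbabilityMeasure μ] (X : Ω → ℝ) (hX : Measurable X)
    (x : ℕ → ℝ) (hx0 : x 0 = 0) (hxmono : StrictMono x) (hxtop : Tendsto x atTop atTop)
    (y : ℕ → ℝ) (hy0 : y 0 = Real.log 2)
    (hy : ∀ n : ℕ, 1 ≤ n → y n = (2 : ℝ) ^ (n ^ 2))
    (hsum : ∀ t : ℝ, 0 < t → Summable (fun n : ℕ => Real.exp (t * x (n + 1) - y n)))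
    (hsym : SymmetricRV μ X)
    (htail : ∀ t : ℝ, 0 ≤ t → ∀ n : ℕ, x n ≤ t → t < x (n + 1) →
      (μ {ω | t < X ω}).toReal = Real.exp (-(y n))) :
    (∀ t : ℝ, lmgf μ X t ≠ ⊤) ∧
    (∀ C : ℝ, 0 < C → ∃ᶠ t in atTop, ∃ r : ℝ, 0 ≤ r ∧ rateFn μ X t ≤ (r : EReal) ∧
      C * r ≤ -Real.log ((μ {ω | t < X ω}).toReal)) ∧
    ¬ RegularUpperTails μ X :=
  no_regular_upper_tails_general μ X hX x hx0 hxmono hxtop y hy hsum hsym htail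
end
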